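/- For complex s with Re(s) > -2, s ≠ 1, the limit lim_{N→∞} ( ∑_{n=1}^N n^{-s} - N^{1-s}/(1-s) - (1/2)N^{-s} + (s/12)·N^{-s-1} ) exists and equals ζ(s). -/

import Mathlib

open Finset Filter Complex

/-!
Euler–Maclaurin summation of order three on `[n, n + 1]`, applied to `f x = x ^ (-s)`, writes the
increment of the corrected partial sums as `∫ₙⁿ⁺¹ B₃(x - n) / 3! · f'''(x) dx`, which is
`O(‖s (s + 1) (s + 2)‖ n ^ (-Re s - 3))`. Hence the corrected sums converge locally uniformly on the
punctured half-plane `{Re s > -2} \ {1}` to a holomorphic function. For `Re s > 1` the correction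
terms tend to `0`, so the limit is `ζ s` there; as the punctured half-plane is connected, the
identity theorem gives equality on all of it.
-/

theorem bernoulliFun_three (x : ℝ) : bernoulliFun 3 x = x ^ 3 - 3 / 2 * x ^ 2 + 1 / 2 * x := by
  simp [bernoulliFun, Polynomial.bernoulli_def, sum_range_succ,
    bernoulli_eq_zero_of_odd (by decide : Odd 3) (by norm_num)]
  ring

theorem abs_bernoulliFun_three_le_one {t : ℝ} (ht₀ : 0 ≤ t) (ht₁ : t ≤ 1) :
    |bernoulliFun 3 t| ≤ 1 := by
  rw [bernoulliFun_three, abs_le]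
  constructor <;> nlinarith [mul_nonneg ht₀ ht₀, mul_nonneg (mul_nonneg ht₀ ht₀) ht₀]

section EulerMaclaurin

variable {E : Type*} [NormedAddCommGroup E] [NormedSpace ℝ E] [CompleteSpace E]
  {f f' f'' f''' : ℝ → E} {a : ℝ}

theorem integral_eq_eulerMaclaurin_three
    (hf : ∀ x ∈ Set.uIcc a (a + 1), HasDerivAt f (f' x) x)
    (hf' : ∀ x ∈ Set.uIcc a (a + 1), HasDerivAt f' (f'' x) x)
    (hf'' : ∀ x ∈ Set.uIcc a (a + 1), HasDerivAt f'' (f''' x) x)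
    (hf''' : IntervalIntegrable f''' MeasureTheory.volume a (a + 1)) :
    ∫ x in a..a + 1, f x = (2⁻¹ : ℝ) • (f a + f (a + 1)) - (12⁻¹ : ℝ) • (f' (a + 1) - f' a)
      - ∫ x in a..a + 1, (bernoulliFun 3 (x - a) / 6) • f''' x := by
  set B : ℕ → ℝ → ℝ := fun k x => bernoulliFun k (x - a)
  have hB (k : ℕ) (x : ℝ) : HasDerivAt (B k) (k * B (k - 1) x) x :=
    (hasDerivAt_bernoulliFun k (x - a)).comp_sub_const x a
  have hH : ∀ x ∈ Set.uIcc a (a + 1), HasDerivAt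
      (fun x => (B 3 x / 6) • f'' x - (B 2 x / 2) • f' x + B 1 x • f x)
      ((B 3 x / 6) • f''' x + f x) x := by
    intro x hx
    convert (((hB 3 x).div_const 6).smul (hf'' x hx)).sub
      (((hB 2 x).div_const 2).smul (hf' x hx)) |>.add ((hB 1 x).smul (hf x hx)) using 1
    · rfl
    · simp only [B, Nat.cast_ofNat, Nat.cast_one, Nat.sub_self, bernoulliFun_zero]
      module
  have hfc : ContinuousOn f (Set.uIcc a (a + 1)) :=
    fun x hx => (hf x hx).continuousAt.continuousWithinAt
  have hint := intervalIntegral.integral_eq_sub_of_hasDerivAt hH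
    ((hf'''.continuousOn_smul (by fun_prop)).add hfc.intervalIntegrable)
  rw [intervalIntegral.integral_add (hf'''.continuousOn_smul (by fun_prop))
    hfc.intervalIntegrable] at hint
  rw [eq_sub_iff_add_eq', hint]
  simp only [B, add_sub_cancel_left, sub_self, bernoulliFun_three, bernoulliFun_two,
    bernoulliFun_one]
  module

end EulerMaclaurin

theorem tendstoUniformlyOn_of_summable_norm_sub {α E : Type*} [NormedAddCommGroup E]
    [CompleteSpace E] {F : ℕ → α → E} {u : ℕ → ℝ} {K : Set α} (hu : Summable u)
    (hF : ∀ n, ∀ x ∈ K, ‖F (n + 1) x - F n x‖ ≤ u n) :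
    TendstoUniformlyOn F (fun x => F 0 x + ∑' n, (F (n + 1) x - F n x)) atTop K := by
  have h := Metric.tendstoUniformlyOn_iff.1 (tendstoUniformlyOn_tsum_nat hu hF)
  refine Metric.tendstoUniformlyOn_iff.2 fun ε hε => (h ε hε).mono fun n hn x hx => ?_
  have htelescope : F n x = F 0 x + ∑ k ∈ range n, (F (k + 1) x - F k x) := by
    rw [sum_range_sub (fun k => F k x)]; abel
  rw [htelescope, dist_add_left]
  exact hn x hx

theorem hasDerivAt_ofReal_cpow_of_pos {x : ℝ} (hx : 0 < x) (c : ℂ) :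
    HasDerivAt (fun y : ℝ => (y : ℂ) ^ c) (c * (x : ℂ) ^ (c - 1)) x :=
  (hasStrictDerivAt_cpow_const (ofReal_mem_slitPlane.2 hx)).hasDerivAt.comp_ofReal

theorem tendsto_natCast_cpow_atTop_zero {c : ℂ} (hc : c.re < 0) :
    Tendsto (fun N : ℕ => (N : ℂ) ^ c) atTop (nhds 0) := by
  rw [tendsto_zero_iff_norm_tendsto_zero]
  simp_rw [norm_natCast_cpow_of_re_ne_zero _ hc.ne]
  have h : Tendsto (fun x : ℝ => x ^ c.re) atTop (nhds 0) := by
    simpa using tendsto_rpow_neg_atTop (neg_pos.2 hc)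
  exact h.comp tendsto_natCast_atTop_atTop

theorem isPreconnected_re_gt_diff_singleton {a : ℝ} {c : ℂ} (hc : a < c.re) :
    IsPreconnected ({z : ℂ | a < z.re} \ {c}) := by
  have hupper := ((convex_halfSpace_re_gt a).inter (convex_halfSpace_im_gt c.im)).isPreconnected
  have hstrip := ((convex_halfSpace_re_gt a).inter (convex_halfSpace_re_lt c.re)).isPreconnected
  have hlower := ((convex_halfSpace_re_gt a).inter (convex_halfSpace_im_lt c.im)).isPreconnected
  have hright := (convex_halfSpace_re_gt c.re).isPreconnected
  set m := (a + c.re) / 2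
  have h := ((hupper.union ⟨m, c.im + 1⟩ ?_ ?_ hstrip).union ⟨m, c.im - 1⟩ ?_ ?_ hlower).union
    ⟨c.re + 1, c.im + 1⟩ ?_ ?_ hright
  · convert h using 1
    ext z
    simp only [Set.mem_sdiff, Set.mem_ofPred_eq, Set.mem_singleton_iff, Set.mem_union,
      Set.mem_inter_iff, Complex.ext_iff]
    grind
  all_goals simp only [Set.mem_union, Set.mem_inter_iff, Set.mem_ofPred_eq]; grind

noncomputable def correctedZetaSum (s : ℂ) (N : ℕ) : ℂ :=
  (∑ n ∈ Icc 1 N, (n : ℂ) ^ (-s)) - (N : ℂ) ^ (1 - s) / (1 - s)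
    - (1 / 2) * (N : ℂ) ^ (-s) + (s / 12) * (N : ℂ) ^ (-s - 1)

theorem correctedZetaSum_succ_sub {s : ℂ} (hs : s ≠ 1) {n : ℕ} (hn : n ≠ 0) :
    correctedZetaSum s (n + 1) - correctedZetaSum s n =
      ∫ x in (n : ℝ)..n + 1, (bernoulliFun 3 (x - n) / 6) •
        (-s * (-s - 1) * (-s - 2) * (x : ℂ) ^ (-s - 3)) := by
  have hpos : ∀ x ∈ Set.uIcc (n : ℝ) (n + 1), 0 < x := fun x hx => by
    rw [Set.uIcc_of_le (by linarith)] at hx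
    exact lt_of_lt_of_le (by positivity) hx.1
  have hcont : ContinuousOn (fun x : ℝ => -s * (-s - 1) * (-s - 2) * (x : ℂ) ^ (-s - 3))
      (Set.uIcc (n : ℝ) (n + 1)) := fun x hx =>
    (continuousAt_const.mul (continuousAt_ofReal_cpow_const x _
      (Or.inr (hpos x hx).ne'))).continuousWithinAt
  have hEM := integral_eq_eulerMaclaurin_three (a := n) (f := fun x : ℝ => (x : ℂ) ^ (-s))
    (f' := fun x => -s * (x : ℂ) ^ (-s - 1)) (f'' := fun x => -s * (-s - 1) * (x : ℂ) ^ (-s - 2))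
    (fun x hx => hasDerivAt_ofReal_cpow_of_pos (hpos x hx) _)
    (fun x hx => ((hasDerivAt_ofReal_cpow_of_pos (hpos x hx) (-s - 1)).const_mul (-s)).congr_deriv
      (by rw [show -s - 1 - 1 = -s - 2 by ring]; ring))
    (fun x hx => ((hasDerivAt_ofReal_cpow_of_pos (hpos x hx) (-s - 2)).const_mul
      (-s * (-s - 1))).congr_deriv (by rw [show -s - 2 - 1 = -s - 3 by ring]; ring))
    hcont.intervalIntegrable
  have hint : ∫ x in (n : ℝ)..n + 1, (x : ℂ) ^ (-s) =
      (((n : ℂ) + 1) ^ (1 - s) - (n : ℂ) ^ (1 - s)) / (1 - s) := by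
    rw [integral_cpow (Or.inr ⟨fun h => hs (by linear_combination -h), fun h => (hpos 0 h).false⟩)]
    push_cast
    ring_nf
  simp only [correctedZetaSum, sum_Icc_succ_top (by omega : 1 ≤ n + 1), Complex.real_smul] at hEM ⊢
  push_cast at hEM ⊢
  linear_combination hint - hEM

theorem norm_correctedZetaSum_succ_sub_le {s : ℂ} (hs : s ≠ 1) (hσ : -3 ≤ s.re) {n : ℕ}
    (hn : n ≠ 0) :
    ‖correctedZetaSum s (n + 1) - correctedZetaSum s n‖ ≤
      ‖s * (s + 1) * (s + 2)‖ * (n : ℝ) ^ (-s.re - 3) := by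
  rw [correctedZetaSum_succ_sub hs hn]
  refine (intervalIntegral.norm_integral_le_of_norm_le_const
    (C := ‖s * (s + 1) * (s + 2)‖ * (n : ℝ) ^ (-s.re - 3)) fun x hx => ?_).trans_eq (by simp)
  rw [Set.uIoc_of_le (by linarith)] at hx
  have hn₀ : (0 : ℝ) < n := by positivity
  have hx₀ : 0 < x := hn₀.trans hx.1
  have hB : ‖bernoulliFun 3 (x - n) / 6‖ ≤ 1 := by
    rw [Real.norm_eq_abs, abs_div, abs_of_pos (by norm_num : (0 : ℝ) < 6), div_le_one (by norm_num)]
    exact (abs_bernoulliFun_three_le_one (by linarith [hx.1]) (by linarith [hx.2])).trans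
      (by norm_num)
  have hpow : ‖(x : ℂ) ^ (-s - 3)‖ ≤ (n : ℝ) ^ (-s.re - 3) := by
    rw [norm_cpow_eq_rpow_re_of_pos hx₀]
    simpa using Real.rpow_le_rpow_of_nonpos hn₀ hx.1.le (by linarith)
  rw [norm_smul, norm_mul, show -s * (-s - 1) * (-s - 2) = -(s * (s + 1) * (s + 2)) by ring,
    norm_neg]
  calc ‖bernoulliFun 3 (x - n) / 6‖ * (‖s * (s + 1) * (s + 2)‖ * ‖(x : ℂ) ^ (-s - 3)‖)
      ≤ 1 * (‖s * (s + 1) * (s + 2)‖ * (n : ℝ) ^ (-s.re - 3)) := by gcongr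
    _ = _ := one_mul _

theorem differentiableAt_correctedZetaSum {s : ℂ} (hs : s ≠ 1) {N : ℕ} (hN : N ≠ 0) :
    DifferentiableAt ℂ (fun z => correctedZetaSum z N) s := by
  have hcpow {n : ℕ} (hn : n ≠ 0) {f : ℂ → ℂ} (hf : Differentiable ℂ f) :
      Differentiable ℂ fun z => (n : ℂ) ^ f z :=
    hf.const_cpow (.inl (Nat.cast_ne_zero.2 hn))
  unfold correctedZetaSum
  fun_prop (disch := grind)

theorem tendsto_sum_Icc_cpow_neg {s : ℂ} (hs : 1 < s.re) :
    Tendsto (fun N : ℕ => ∑ n ∈ Icc 1 N, (n : ℂ) ^ (-s)) atTop (nhds (riemannZeta s)) := by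
  have hsummable : Summable fun n : ℕ => 1 / ((n + 1 : ℕ) : ℂ) ^ s :=
    (summable_nat_add_iff 1).2 (Complex.summable_one_div_nat_cpow.2 hs)
  rw [zeta_eq_tsum_one_div_nat_add_one_cpow hs]
  convert hsummable.hasSum.tendsto_sum_nat using 2 with N
  · rw [range_eq_Ico, sum_Ico_add' (fun n : ℕ => 1 / (n : ℂ) ^ s), zero_add,
      Ico_add_one_right_eq_Icc]
    simp [cpow_neg]
  · simp

theorem tendsto_correctedZetaSum_of_one_lt_re {s : ℂ} (hs : 1 < s.re) :
    Tendsto (correctedZetaSum s) atTop (nhds (riemannZeta s)) := by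
  have h := (((tendsto_sum_Icc_cpow_neg hs).sub
    ((tendsto_natCast_cpow_atTop_zero (c := 1 - s) (by simpa using hs)).div_const (1 - s))).sub
    ((tendsto_natCast_cpow_atTop_zero (c := -s) (by rw [neg_re]; linarith)).const_mul
      (1 / 2))).add ((tendsto_natCast_cpow_atTop_zero (c := -s - 1)
        (by rw [sub_re, neg_re, one_re]; linarith)).const_mul (s / 12))
  rwa [zero_div, mul_zero, mul_zero, sub_zero, sub_zero, add_zero] at h

theorem exists_tendstoLocallyUniformlyOn_correctedZetaSum :
    ∃ L : ℂ → ℂ, TendstoLocallyUniformlyOn (fun n s => correctedZetaSum s (n + 1)) L atTop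
      ({s | -2 < s.re} \ {1}) := by
  have hU : IsOpen ({s : ℂ | -2 < s.re} \ {1}) :=
    (isOpen_lt continuous_const continuous_re).sdiff isClosed_singleton
  refine ⟨fun s => correctedZetaSum s 1 +
      ∑' n, (correctedZetaSum s (n + 1 + 1) - correctedZetaSum s (n + 1)),
    (tendstoLocallyUniformlyOn_iff_forall_isCompact hU).2 fun K hKU hK => ?_⟩
  rcases K.eq_empty_or_nonempty with rfl | hne
  · exact tendstoUniformlyOn_empty
  obtain ⟨z₀, hz₀, hmin⟩ := hK.exists_isMinOn hne continuous_re.continuousOn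
  obtain ⟨C, hC⟩ := hK.exists_bound_of_continuousOn (f := fun s : ℂ => s * (s + 1) * (s + 2))
    (by fun_prop)
  have hσ : -2 < z₀.re := (hKU hz₀).1
  refine tendstoUniformlyOn_of_summable_norm_sub
    (u := fun n => C * ((n + 1 : ℕ) : ℝ) ^ (-z₀.re - 3))
    (((summable_nat_add_iff 1).2 (Real.summable_nat_rpow.2 (by linarith))).mul_left C)
    fun n s hs => ?_
  have hs' : -2 < s.re ∧ s ≠ 1 := hKU hs
  calc ‖correctedZetaSum s (n + 1 + 1) - correctedZetaSum s (n + 1)‖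
      ≤ ‖s * (s + 1) * (s + 2)‖ * ((n + 1 : ℕ) : ℝ) ^ (-s.re - 3) :=
        norm_correctedZetaSum_succ_sub_le hs'.2 (by linarith) n.succ_ne_zero
    _ ≤ C * ((n + 1 : ℕ) : ℝ) ^ (-z₀.re - 3) :=
        mul_le_mul (hC s hs) (Real.rpow_le_rpow_of_exponent_le (by simp)
          (by linarith [show z₀.re ≤ s.re from hmin hs])) (by positivity)
          ((norm_nonneg _).trans (hC s hs))

/-- The limit lim_{N→∞} (∑_{n=1}^N n^{-s} - N^{1-s}/(1-s) - (1/2)N^{-s} + (s/12)N^{-s-1})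
exists and equals ζ(s) for Re(s) > -2, s ≠ 1. -/
theorem zeta_limit_re_gt_neg_two (s : ℂ) (hs : -2 < s.re) (hs' : s ≠ 1) :
    Tendsto
      (fun N : ℕ => (∑ n ∈ Icc 1 N, (n : ℂ) ^ (-s)) - (N : ℂ) ^ (1 - s) / (1 - s)
        - (1 / 2) * (N : ℂ) ^ (-s) + (s / 12) * (N : ℂ) ^ (-s - 1))
      atTop (nhds (riemannZeta s)) := by
  set U : Set ℂ := {s | -2 < s.re} \ {1}
  have hU : IsOpen U := (isOpen_lt continuous_const continuous_re).sdiff isClosed_singleton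
  obtain ⟨L, hL⟩ := exists_tendstoLocallyUniformlyOn_correctedZetaSum
  have hLζ : Set.EqOn L riemannZeta U := by
    have hLan : AnalyticOnNhd ℂ L U := (hL.differentiableOn (.of_forall fun n s hs =>
      (differentiableAt_correctedZetaSum hs.2 n.succ_ne_zero).differentiableWithinAt) hU)
      |>.analyticOnNhd hU
    have hζan : AnalyticOnNhd ℂ riemannZeta U := analyticOn_riemannZeta.mono fun z hz => hz.2
    refine hLan.eqOn_of_preconnected_of_eventuallyEq hζan
      (isPreconnected_re_gt_diff_singleton (by norm_num)) (z₀ := 2) (by norm_num [U]) ?_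
    filter_upwards [(isOpen_lt continuous_const continuous_re).mem_nhds
      (show (1 : ℝ) < (2 : ℂ).re by norm_num)] with z (hz : 1 < z.re)
    have hzU : z ∈ U := ⟨show -2 < z.re by linarith, by rintro rfl; norm_num at hz⟩
    exact tendsto_nhds_unique (hL.tendsto_at hzU)
      ((tendsto_add_atTop_iff_nat 1).2 (tendsto_correctedZetaSum_of_one_lt_re hz))
  exact (tendsto_add_atTop_iff_nat 1).1 (hLζ ⟨hs, hs'⟩ ▸ hL.tendsto_at ⟨hs, hs'⟩)
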